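/- Let n be a positive integer, 0 ≤ e < 1 and β ≥ 0. Suppose y: ℝ → ℝ² is 2π-periodic, continuously differentiable, and orthogonal to all trigonometric functions of degree at most n, i.e., ∫₀^{2π} y(t)·cos(kt) dt = 0 and ∫₀^{2π} y(t)·sin(kt) dt = 0 (componentwise) for every integer 0 ≤ k ≤ n. Then Q_{β,e}(y) ≥ (n² − 1 + 1/(1+e) − (3√2−1)(β+1)/(2(1−e)))·∫₀^{2π}|y(t)|² dt. In particular, Q_{β,e}(y) ≥ 0 whenever β < (2/(3√2−1))·(n² − e/(1+e))·(1−e) − 1. -/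

import Mathlib

/-- The quadratic form associated with the essential part of the linearized Hamiltonian
system at the elliptic Euler solution with parameters `(β, e)`. -/
noncomputable def eulerQ (β e : ℝ) (z : ℝ → ℝ × ℝ) : ℝ :=
  ∫ t in (0 : ℝ)..(2 * Real.pi),
    (((deriv z t).1 ^ 2 + (deriv z t).2 ^ 2) - ((z t).1 ^ 2 + (z t).2 ^ 2)
      + ((β + 3) * ((z t).1 ^ 2 + (z t).2 ^ 2)
          + 3 * (β + 1) * ((Real.cos (2 * t) * (z t).1 + Real.sin (2 * t) * (z t).2) * (z t).1
              + (Real.sin (2 * t) * (z t).1 - Real.cos (2 * t) * (z t).2) * (z t).2))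
        / (2 * (1 + e * Real.cos t)))

/-! Since `S(t)` is a reflection, `⟨S(t)z, z⟩ ≥ -|z|²`, and `1 - e ≤ 1 + e cos t ≤ 1 + e`; hence the
potential term of `Q_{β,e}` is pointwise at least `(1/(1+e) - (β+1)/(1-e))|z|²`. Wirtinger's
inequality `∫|y'|² ≥ n² ∫|y|²` follows from Parseval, because the Fourier coefficients of `y` vanish
in degrees `≤ n` and those of `y'` are `ik` times those of `y`. Together they give the lower bound
with the constant `n² - 1 + 1/(1+e) - (β+1)/(1-e)`, which dominates the stated one because
`(3√2 - 1)/2 ≥ 1`. -/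

open MeasureTheory Real Set intervalIntegral

section Wirtinger

variable {a b : ℝ} (hab : a < b)

theorem memLp_two_restrict_Ioc_of_continuousOn {g : ℝ → ℂ} (hg : ContinuousOn g (Icc a b)) :
    MemLp g 2 (volume.restrict (Ioc a b)) := by
  have hIcc : MemLp g 2 (volume.restrict (Icc a b)) :=
    (memLp_two_iff_integrable_sq_norm (hg.aestronglyMeasurable measurableSet_Icc)).2
      ((hg.norm.pow 2).integrableOn_compact isCompact_Icc)
  exact hIcc.mono_measure (Measure.restrict_mono Ioc_subset_Icc_self le_rfl)

include hab in
theorem fourierCoeffOn_deriv_of_left_eq_right {f f' : ℝ → ℂ}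
    (hf : ∀ x ∈ Icc a b, HasDerivAt f (f' x) x)
    (hf' : ContinuousOn f' (Icc a b)) (hfab : f a = f b) {k : ℤ} (hk : k ≠ 0) :
    fourierCoeffOn hab f' k = 2 * π * Complex.I * k / (b - a) * fourierCoeffOn hab f k := by
  have h := fourierCoeffOn_of_hasDerivAt hab hk (by rwa [uIcc_of_lt hab])
    (hf'.intervalIntegrable_of_Icc hab.le)
  rw [hfab, sub_self, mul_zero, zero_sub] at h
  have hba : (b - a : ℂ) ≠ 0 := by exact_mod_cast (sub_pos.2 hab).ne'
  have hk' : (k : ℂ) ≠ 0 := Int.cast_ne_zero.2 hk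
  rw [h]
  field_simp

include hab in
theorem norm_fourierCoeffOn_deriv_of_left_eq_right {f f' : ℝ → ℂ}
    (hf : ∀ x ∈ Icc a b, HasDerivAt f (f' x) x)
    (hf' : ContinuousOn f' (Icc a b)) (hfab : f a = f b) {k : ℤ} (hk : k ≠ 0) :
    ‖fourierCoeffOn hab f' k‖ = 2 * π * |k| / (b - a) * ‖fourierCoeffOn hab f k‖ := by
  have hba : ‖(b : ℂ) - a‖ = b - a := by
    rw [← Complex.ofReal_sub, Complex.norm_real, norm_of_nonneg (sub_pos.2 hab).le]
  rw [fourierCoeffOn_deriv_of_left_eq_right hab hf hf' hfab hk]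
  simp [hba, Complex.norm_intCast, abs_of_pos pi_pos]

theorem mul_integral_norm_sq_le_integral_norm_deriv_sq {f f' : ℝ → ℂ}
    (hf : ∀ x ∈ Icc a b, HasDerivAt f (f' x) x)
    (hf' : ContinuousOn f' (Icc a b)) (hfab : f a = f b) (n : ℕ)
    (hlow : ∀ k : ℤ, |k| ≤ n → fourierCoeffOn hab f k = 0) :
    (2 * π * n / (b - a)) ^ 2 * ∫ x in a..b, ‖f x‖ ^ 2 ≤ ∫ x in a..b, ‖f' x‖ ^ 2 := by
  have hfc : ContinuousOn f (Icc a b) := fun x hx => (hf x hx).continuousAt.continuousWithinAt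
  have hsum := hasSum_sq_fourierCoeffOn hab (memLp_two_restrict_Ioc_of_continuousOn hfc)
  have hsum' := hasSum_sq_fourierCoeffOn hab (memLp_two_restrict_Ioc_of_continuousOn hf')
  have hba : 0 < b - a := sub_pos.2 hab
  have hterm : ∀ k : ℤ, (2 * π * n / (b - a)) ^ 2 * ‖fourierCoeffOn hab f k‖ ^ 2
      ≤ ‖fourierCoeffOn hab f' k‖ ^ 2 := by
    intro k
    rcases le_or_gt |k| n with hk | hk
    · simp [hlow k hk]
    · have hk0 : k ≠ 0 := abs_pos.1 (lt_of_le_of_lt (Int.natCast_nonneg n) hk)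
      have hnk : (n : ℝ) ≤ (|k| : ℤ) := by exact_mod_cast hk.le
      rw [norm_fourierCoeffOn_deriv_of_left_eq_right hab hf hf' hfab hk0, mul_pow]
      gcongr
  have := hasSum_le hterm (hsum.mul_left _) hsum'
  rw [smul_eq_mul, smul_eq_mul, mul_left_comm] at this
  exact le_of_mul_le_mul_left this (inv_pos.2 hba)

end Wirtinger

theorem fourier_neg_coe_eq_cos_sub_sin (k : ℤ) (t : ℝ) :
    fourier (-k) (t : AddCircle (2 * π - 0)) =
      (cos (k * t) : ℂ) - (sin (k * t) : ℂ) * Complex.I := by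
  have harg : 2 * π * Complex.I * (-k : ℤ) * t / (2 * π - 0 : ℝ) = -(k * t : ℝ) * Complex.I := by
    push_cast
    field_simp
    ring
  rw [fourier_coe_apply, harg, ← Complex.cos_sub_sin_I, Complex.ofReal_cos, Complex.ofReal_sin]

theorem fourierCoeffOn_ofReal_eq_zero {f : ℝ → ℝ} (hf : ContinuousOn f (Icc 0 (2 * π))) {k : ℤ}
    (hcos : ∫ t in 0..2 * π, f t * cos (k * t) = 0)
    (hsin : ∫ t in 0..2 * π, f t * sin (k * t) = 0) :
    fourierCoeffOn two_pi_pos (fun t => (f t : ℂ)) k = 0 := by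
  have hint : ∀ g : ℝ → ℝ, Continuous g →
      IntervalIntegrable (fun t => ((f t * g (k * t) : ℝ) : ℂ)) volume 0 (2 * π) := fun g hg =>
    (Complex.continuous_ofReal.comp_continuousOn
      (hf.mul (hg.comp (continuous_const_mul _)).continuousOn)).intervalIntegrable_of_Icc
      two_pi_pos.le
  have hsplit : ∫ t in 0..2 * π, fourier (-k) (t : AddCircle (2 * π - 0)) • (f t : ℂ)
      = ((∫ t in 0..2 * π, f t * cos (k * t) : ℝ) : ℂ)
        - ((∫ t in 0..2 * π, f t * sin (k * t) : ℝ) : ℂ) * Complex.I := by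
    rw [← intervalIntegral.integral_ofReal, ← intervalIntegral.integral_ofReal,
      ← intervalIntegral.integral_mul_const,
      ← integral_sub (hint cos continuous_cos) ((hint sin continuous_sin).mul_const _)]
    refine integral_congr fun t _ => ?_
    rw [fourier_neg_coe_eq_cos_sub_sin, smul_eq_mul]
    push_cast
    ring
  rw [fourierCoeffOn_eq_integral, hsplit, hcos, hsin]
  simp

theorem sq_mul_integral_sq_le_integral_deriv_sq {f f' : ℝ → ℝ}
    (hf : ∀ t ∈ Icc 0 (2 * π), HasDerivAt f (f' t) t) (hf' : ContinuousOn f' (Icc 0 (2 * π)))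
    (hper : f 0 = f (2 * π)) (n : ℕ)
    (hcos : ∀ k : ℕ, k ≤ n → ∫ t in 0..2 * π, f t * cos (k * t) = 0)
    (hsin : ∀ k : ℕ, k ≤ n → ∫ t in 0..2 * π, f t * sin (k * t) = 0) :
    (n : ℝ) ^ 2 * ∫ t in 0..2 * π, f t ^ 2 ≤ ∫ t in 0..2 * π, f' t ^ 2 := by
  have hfc : ContinuousOn f (Icc 0 (2 * π)) := fun t ht =>
    (hf t ht).continuousAt.continuousWithinAt
  have hlow : ∀ k : ℤ, |k| ≤ n → fourierCoeffOn two_pi_pos (fun t => (f t : ℂ)) k = 0 := by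
    intro k hk
    obtain ⟨m, rfl | rfl⟩ := Int.eq_nat_or_neg k <;>
    · have hm : m ≤ n := by simpa using hk
      exact fourierCoeffOn_ofReal_eq_zero hfc (by simpa using hcos m hm) (by simpa using hsin m hm)
  have key := mul_integral_norm_sq_le_integral_norm_deriv_sq two_pi_pos
    (fun t ht => (hf t ht).ofReal_comp) (Complex.continuous_ofReal.comp_continuousOn hf')
    (by simp only [hper]) n hlow
  have hconst : 2 * π * n / (2 * π - 0) = n := by field_simp; ring
  simpa [hconst] using key

theorem sq_mul_integral_sq_add_sq_le_integral_deriv_sq {y : ℝ → ℝ × ℝ} (hy : ContDiff ℝ 1 y)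
    (hper : y 0 = y (2 * π)) (n : ℕ)
    (horth : ∀ k : ℕ, k ≤ n →
      (∫ t in 0..2 * π, (y t).1 * cos (k * t)) = 0 ∧
      (∫ t in 0..2 * π, (y t).2 * cos (k * t)) = 0 ∧
      (∫ t in 0..2 * π, (y t).1 * sin (k * t)) = 0 ∧
      (∫ t in 0..2 * π, (y t).2 * sin (k * t)) = 0) :
    (n : ℝ) ^ 2 * ∫ t in 0..2 * π, ((y t).1 ^ 2 + (y t).2 ^ 2)
      ≤ ∫ t in 0..2 * π, ((deriv y t).1 ^ 2 + (deriv y t).2 ^ 2) := by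
  have hy' : ∀ t, HasDerivAt y (deriv y t) t := fun t =>
    (hy.differentiable one_ne_zero t).hasDerivAt
  have hdy : ContinuousOn (deriv y) (Icc 0 (2 * π)) :=
    (hy.continuous_deriv le_rfl).continuousOn
  have h₁ := sq_mul_integral_sq_le_integral_deriv_sq
    (fun t _ => hasFDerivAt_fst.comp_hasDerivAt t (hy' t)) (continuous_fst.comp_continuousOn hdy)
    (congrArg Prod.fst hper) n (fun k hk => (horth k hk).1) (fun k hk => (horth k hk).2.2.1)
  have h₂ := sq_mul_integral_sq_le_integral_deriv_sq
    (fun t _ => hasFDerivAt_snd.comp_hasDerivAt t (hy' t)) (continuous_snd.comp_continuousOn hdy)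
    (congrArg Prod.snd hper) n (fun k hk => (horth k hk).2.1) (fun k hk => (horth k hk).2.2.2)
  have hyc := hy.continuous
  have hdyc := hy.continuous_deriv le_rfl
  rw [intervalIntegral.integral_add, intervalIntegral.integral_add, mul_add]
  · exact add_le_add h₁ h₂
  all_goals exact Continuous.intervalIntegrable (by fun_prop) _ _

theorem neg_sum_sq_le_reflection_form {c s u v : ℝ} (hcs : c ^ 2 + s ^ 2 = 1) :
    -(u ^ 2 + v ^ 2) ≤ (c * u + s * v) * u + (s * u - c * v) * v := by
  have hsq : (u ^ 2 + v ^ 2) ^ 2 - ((c * u + s * v) * u + (s * u - c * v) * v) ^ 2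
      = (s * (u ^ 2 - v ^ 2) - c * (2 * u * v)) ^ 2 := by
    linear_combination (-((u ^ 2 - v ^ 2) ^ 2 + (2 * u * v) ^ 2)) * hcs
  nlinarith [sq_nonneg (s * (u ^ 2 - v ^ 2) - c * (2 * u * v)), sq_nonneg u, sq_nonneg v]

theorem mul_le_div_of_neg_le {e β N W x : ℝ} (he0 : 0 ≤ e) (he1 : e < 1) (hβ : -1 ≤ β)
    (hN : 0 ≤ N) (hW : -N ≤ W) (hx : |x| ≤ 1) :
    (1 / (1 + e) - (β + 1) / (1 - e)) * N
      ≤ ((β + 3) * N + 3 * (β + 1) * W) / (2 * (1 + e * x)) := by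
  obtain ⟨hx₁, hx₂⟩ := abs_le.1 hx
  have hlo : 1 - e ≤ 1 + e * x := by nlinarith
  have hhi : 1 + e * x ≤ 1 + e := by nlinarith
  set p := N / (1 + e) with hp
  set q := (β + 1) * N / (1 - e) with hq
  have hp' : p * (1 + e) = N := div_mul_cancel₀ _ (by linarith)
  have hq' : q * (1 - e) = (β + 1) * N := div_mul_cancel₀ _ (by linarith)
  have hp0 : 0 ≤ p := by positivity
  have hq0 : 0 ≤ q := div_nonneg (mul_nonneg (by linarith) hN) (by linarith)
  have hpq : (1 / (1 + e) - (β + 1) / (1 - e)) * N = p - q := by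
    rw [hp, hq]; ring
  rw [hpq, le_div_iff₀ (by linarith)]
  nlinarith [mul_le_mul_of_nonneg_left hhi hp0, mul_le_mul_of_nonneg_left hlo hq0,
    mul_le_mul_of_nonneg_left (show -(2 * N) ≤ N + 3 * W by linarith) (show 0 ≤ β + 1 by linarith)]

theorem integral_add_mul_integral_le_eulerQ {β e : ℝ} (he0 : 0 ≤ e) (he1 : e < 1) (hβ : -1 ≤ β)
    {y : ℝ → ℝ × ℝ} (hy : Continuous y) (hy' : Continuous (deriv y)) :
    (∫ t in 0..2 * π, ((deriv y t).1 ^ 2 + (deriv y t).2 ^ 2))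
        + (1 / (1 + e) - (β + 1) / (1 - e) - 1) * ∫ t in 0..2 * π, ((y t).1 ^ 2 + (y t).2 ^ 2)
      ≤ eulerQ β e y := by
  have hden : ∀ t, 2 * (1 + e * cos t) ≠ 0 := fun t => by
    nlinarith [neg_one_le_cos t, cos_le_one t]
  rw [← intervalIntegral.integral_const_mul, ← intervalIntegral.integral_add
    (Continuous.intervalIntegrable (by fun_prop) _ _)
    (Continuous.intervalIntegrable (by fun_prop) _ _)]
  refine integral_mono_on two_pi_pos.le (Continuous.intervalIntegrable (by fun_prop) _ _)
    (Continuous.intervalIntegrable (by fun_prop (disch := exact hden)) _ _) fun t _ => ?_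
  have := mul_le_div_of_neg_le he0 he1 hβ (by positivity)
    (neg_sum_sq_le_reflection_form (u := (y t).1) (v := (y t).2) (cos_sq_add_sin_sq (2 * t)))
    (abs_cos_le_one t)
  linarith

theorem div_le_three_sqrt_two_sub_one_mul_div {e β : ℝ} (he1 : e < 1) (hβ : -1 ≤ β) :
    (β + 1) / (1 - e) ≤ (3 * √2 - 1) * (β + 1) / (2 * (1 - e)) := by
  have hκ : 1 ≤ (3 * √2 - 1) / 2 := by
    have := Real.one_lt_sqrt_two
    linarith
  rw [← div_mul_div_comm]
  exact le_mul_of_one_le_left (div_nonneg (by linarith) (by linarith)) hκ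

theorem sub_mul_div_nonneg_of_lt {κ m e β : ℝ} (hκ : 0 < κ) (he1 : e < 1)
    (h : β < 2 / κ * m * (1 - e) - 1) : 0 ≤ m - κ * (β + 1) / (2 * (1 - e)) := by
  have hlt : κ * (β + 1) < κ * (2 / κ * m * (1 - e)) := mul_lt_mul_of_pos_left (by linarith) hκ
  rw [show κ * (2 / κ * m * (1 - e)) = m * (2 * (1 - e)) by field_simp] at hlt
  rw [sub_nonneg, div_le_iff₀ (by linarith)]
  exact hlt.le

theorem euler_form_lower_bound (n : ℕ) (e β : ℝ)
    (he0 : 0 ≤ e) (he1 : e < 1) (hβ : 0 ≤ β)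
    (y : ℝ → ℝ × ℝ) (hy : ContDiff ℝ 1 y) (hper : ∀ t, y (t + 2 * Real.pi) = y t)
    (horth : ∀ k : ℕ, k ≤ n →
      (∫ t in (0 : ℝ)..(2 * Real.pi), (y t).1 * Real.cos ((k : ℝ) * t)) = 0 ∧
      (∫ t in (0 : ℝ)..(2 * Real.pi), (y t).2 * Real.cos ((k : ℝ) * t)) = 0 ∧
      (∫ t in (0 : ℝ)..(2 * Real.pi), (y t).1 * Real.sin ((k : ℝ) * t)) = 0 ∧
      (∫ t in (0 : ℝ)..(2 * Real.pi), (y t).2 * Real.sin ((k : ℝ) * t)) = 0) :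
    eulerQ β e y ≥
      ((n : ℝ) ^ 2 - 1 + 1 / (1 + e) - (3 * Real.sqrt 2 - 1) * (β + 1) / (2 * (1 - e)))
        * ∫ t in (0 : ℝ)..(2 * Real.pi), ((y t).1 ^ 2 + (y t).2 ^ 2) ∧
    (β < 2 / (3 * Real.sqrt 2 - 1) * ((n : ℝ) ^ 2 - e / (1 + e)) * (1 - e) - 1 →
      0 ≤ eulerQ β e y) := by
  have hβ' : -1 ≤ β := by linarith
  have hwirt := sq_mul_integral_sq_add_sq_le_integral_deriv_sq hy
    (by simpa using (hper 0).symm) n horth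
  have hQ := integral_add_mul_integral_le_eulerQ he0 he1 hβ' hy.continuous
    (hy.continuous_deriv le_rfl)
  have hN : 0 ≤ ∫ t in (0 : ℝ)..(2 * π), ((y t).1 ^ 2 + (y t).2 ^ 2) :=
    integral_nonneg two_pi_pos.le fun t _ => by positivity
  have hκ := div_le_three_sqrt_two_sub_one_mul_div he1 hβ'
  have hfirst := calc
    ((n : ℝ) ^ 2 - 1 + 1 / (1 + e) - (3 * √2 - 1) * (β + 1) / (2 * (1 - e)))
        * ∫ t in (0 : ℝ)..(2 * π), ((y t).1 ^ 2 + (y t).2 ^ 2)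
      ≤ ((n : ℝ) ^ 2 - 1 + (1 / (1 + e) - (β + 1) / (1 - e)))
        * ∫ t in (0 : ℝ)..(2 * π), ((y t).1 ^ 2 + (y t).2 ^ 2) := by gcongr; linarith
    _ ≤ eulerQ β e y := by linarith
  refine ⟨hfirst, fun hlt => le_trans (mul_nonneg ?_ hN) hfirst⟩
  have hpos : 0 < 3 * √2 - 1 := by linarith [Real.one_lt_sqrt_two]
  have he : -1 + 1 / (1 + e) = -(e / (1 + e)) := by field_simp; ring
  linarith [sub_mul_div_nonneg_of_lt hpos he1 hlt]
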